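/- For every π ∈ S_n, the minimum over the coset min_{0 ≤ i < n} inv(π·c_n^i) is at most the average (1/n)·Σ_{i=1}^n inv(π·c_n^i), which equals (cwinv(π) + C(n+1,3))/n. -/

import Mathlib

open Finset

def inversions {n : ℕ} (π : Equiv.Perm (Fin n)) : ℕ :=
  (Finset.univ.filter (fun p : Fin n × Fin n => p.1 < p.2 ∧ π p.2 < π p.1)).card

def winv {n : ℕ} (π : Equiv.Perm (Fin n)) : ℤ :=
  ∑ p ∈ Finset.univ.filter (fun p : Fin n × Fin n => p.1 < p.2 ∧ π p.2 < π p.1),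
    ((π p.1 : ℤ) - (π p.2 : ℤ))

def cwinv {n : ℕ} (π : Equiv.Perm (Fin n)) : ℤ :=
  n * inversions π - 2 * winv π

/-!
Shifting positions by `t`, the inversions of `π * c ^ t` are the pairs `(x, y)` with
`π y < π x` and `x - t < y - t` in `ℤ/n`. For `x < y` the latter holds for `n - (y - x)`
values of `t`, for `y < x` for `x - y` values, so summing over `t` gives
`n * inv π + C(n+1, 3) - 2 * Σ (b - a)`, the last sum running over the inversions `(a, b)` of `π`.
That sum of position gaps is `winv π⁻¹`, and it equals the sum `winv π` of value gaps because
`2 * winv π = C(n+1, 3) - Σ_{a<b} (π b - π a)` while `Σ_{a<b} (π b - π a) = Σ_j (2j - n + 1) π j`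
is unchanged under `π ↦ π⁻¹`.
-/

section
variable {α M : Type*} [Fintype α] [LinearOrder α] [AddCommMonoid M]

lemma sum_eq_sum_filter_lt_add_swap (f : α × α → M) (hf : ∀ a, f (a, a) = 0) :
    ∑ p, f p = ∑ p ∈ univ.filter (fun p : α × α => p.1 < p.2), (f p + f p.swap) := by
  have hswap : ∑ p ∈ univ.filter (fun p : α × α => p.1 < p.2), f p.swap
      = ∑ p ∈ univ.filter (fun p : α × α => p.2 < p.1), f p :=
    sum_equiv (Equiv.prodComm α α) (by simp) (by simp)
  have hgt : ∑ p ∈ univ.filter (fun p : α × α => p.2 < p.1), f p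
      = ∑ p ∈ univ.filter (fun p : α × α => ¬ p.1 < p.2), f p := by
    refine sum_subset (fun p => by simpa using le_of_lt) fun ⟨a, b⟩ hp hp' => ?_
    obtain rfl : a = b := by
      simp only [mem_filter, mem_univ, true_and, not_lt] at hp hp'
      exact le_antisymm hp' hp
    exact hf a
  rw [sum_add_distrib, hswap, hgt, sum_filter_add_sum_filter_not]

lemma sum_filter_lt_eq_sum_sum_Iio [LocallyFiniteOrderBot α] (g : α → α → M) :
    ∑ p ∈ univ.filter (fun p : α × α => p.1 < p.2), g p.1 p.2 = ∑ b, ∑ a ∈ Iio b, g a b := by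
  rw [sum_filter, Fintype.sum_prod_type, sum_comm]
  refine sum_congr rfl fun b _ => ?_
  rw [← filter_gt_eq_Iio, sum_filter]

lemma sum_filter_lt_eq_sum_sum_Ioi [LocallyFiniteOrderTop α] (g : α → α → M) :
    ∑ p ∈ univ.filter (fun p : α × α => p.1 < p.2), g p.1 p.2 = ∑ a, ∑ b ∈ Ioi a, g a b := by
  rw [sum_filter, Fintype.sum_prod_type]
  refine sum_congr rfl fun a _ => ?_
  rw [← filter_lt_eq_Ioi, sum_filter]
end

section
variable {n : ℕ}

lemma sum_filter_lt_sub (f : Fin n → ℤ) :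
    ∑ p ∈ univ.filter (fun p : Fin n × Fin n => p.1 < p.2), (f p.2 - f p.1)
      = ∑ j : Fin n, (2 * (j : ℤ) - (n - 1)) * f j := by
  rw [sum_sub_distrib, sum_filter_lt_eq_sum_sum_Iio (fun _ b => f b),
    sum_filter_lt_eq_sum_sum_Ioi (fun a _ => f a), ← sum_sub_distrib]
  refine sum_congr rfl fun j _ => ?_
  simp only [sum_const, Fin.card_Iio, Fin.card_Ioi, nsmul_eq_mul]
  have := j.isLt
  push_cast [Nat.cast_sub (by omega : 1 ≤ n), Nat.cast_sub (by omega : (j : ℕ) ≤ n - 1)]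
  ring

lemma sum_filter_lt_inv_apply_sub (σ : Equiv.Perm (Fin n)) :
    ∑ p ∈ univ.filter (fun p : Fin n × Fin n => p.1 < p.2), ((σ⁻¹ p.2 : ℤ) - σ⁻¹ p.1)
      = ∑ p ∈ univ.filter (fun p : Fin n × Fin n => p.1 < p.2), ((σ p.2 : ℤ) - σ p.1) := by
  rw [sum_filter_lt_sub (fun j => (σ⁻¹ j : ℤ)), sum_filter_lt_sub (fun j => (σ j : ℤ)),
    ← Equiv.sum_comp σ]
  simp only [Equiv.Perm.coe_inv, Equiv.symm_apply_apply, sub_mul, sum_sub_distrib, mul_assoc,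
    ← mul_sum, Equiv.sum_comp σ (fun j => (j : ℤ)), mul_comm (σ _ : ℤ)]

lemma winv_inv_eq_sum_sub (σ : Equiv.Perm (Fin n)) :
    winv σ⁻¹ = ∑ p ∈ univ.filter (fun p : Fin n × Fin n => p.1 < p.2 ∧ σ p.2 < σ p.1),
      ((p.2 : ℤ) - p.1) :=
  sum_equiv ((Equiv.prodComm _ _).trans (σ⁻¹.prodCongr σ⁻¹)) (by simp [and_comm]) (by simp)

lemma sum_filter_lt_abs_apply_sub (σ : Equiv.Perm (Fin n)) :
    ∑ p ∈ univ.filter (fun p : Fin n × Fin n => p.1 < p.2), |(σ p.2 : ℤ) - σ p.1|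
      = ∑ p ∈ univ.filter (fun p : Fin n × Fin n => p.1 < p.2), ((p.2 : ℤ) - p.1) := by
  have hsymm (g : Fin n → ℤ) : ∑ p : Fin n × Fin n, |g p.2 - g p.1|
      = 2 * ∑ p ∈ univ.filter (fun p : Fin n × Fin n => p.1 < p.2), |g p.2 - g p.1| := by
    rw [sum_eq_sum_filter_lt_add_swap _ (by simp), two_mul, ← sum_add_distrib]
    simp [abs_sub_comm]
  have hσ := Equiv.sum_comp (σ.prodCongr σ) (fun p => |(p.2 : ℤ) - p.1|)
  simp only [Equiv.prodCongr_apply, Prod.map] at hσ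
  rw [hsymm (fun j => (σ j : ℤ)), hsymm (fun j => (j : ℤ))] at hσ
  rw [mul_left_cancel₀ two_ne_zero hσ]
  exact sum_congr rfl fun p hp => abs_of_pos (by simpa using (mem_filter.1 hp).2)

lemma sum_filter_lt_apply_sub (σ : Equiv.Perm (Fin n)) :
    ∑ p ∈ univ.filter (fun p : Fin n × Fin n => p.1 < p.2), ((σ p.2 : ℤ) - σ p.1)
      = ∑ p ∈ univ.filter (fun p : Fin n × Fin n => p.1 < p.2), ((p.2 : ℤ) - p.1)
        - 2 * winv σ := by
  rw [← sum_filter_lt_abs_apply_sub σ, winv, ← filter_filter,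
    sum_filter (fun p : Fin n × Fin n => σ p.2 < σ p.1), mul_sum, ← sum_sub_distrib]
  refine sum_congr rfl fun p _ => ?_
  split_ifs with h
  · rw [abs_of_neg (by simpa using h)]; ring
  · rw [abs_of_nonneg (by simpa using h)]; ring

lemma winv_inv (σ : Equiv.Perm (Fin n)) : winv σ⁻¹ = winv σ := by
  have h := sum_filter_lt_inv_apply_sub σ
  rw [sum_filter_lt_apply_sub, sum_filter_lt_apply_sub] at h
  linarith

lemma sum_filter_inversion_sub_eq_winv (σ : Equiv.Perm (Fin n)) :
    ∑ p ∈ univ.filter (fun p : Fin n × Fin n => p.1 < p.2 ∧ σ p.2 < σ p.1), ((p.2 : ℤ) - p.1)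
      = winv σ := by
  rw [← winv_inv_eq_sum_sub, winv_inv]

lemma sum_range_sub_eq_choose_two (b : ℕ) : ∑ a ∈ range b, ((b : ℤ) - a) = (b + 1).choose 2 := by
  induction b with
  | zero => simp
  | succ b ih =>
    rw [sum_range_succ', Nat.choose_succ_succ' (b + 1) 1]
    push_cast [Nat.choose_one_right]
    simp only [add_sub_add_right_eq_sub, ih]
    ring

lemma sum_range_succ_choose_two (n : ℕ) : ∑ b ∈ range n, (b + 1).choose 2 = (n + 1).choose 3 := by
  induction n with
  | zero => rfl
  | succ n ih => rw [sum_range_succ, ih, Nat.choose_succ_succ' (n + 1) 2]; ring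

lemma sum_filter_lt_sub_eq_choose_three (n : ℕ) :
    ∑ p ∈ univ.filter (fun p : Fin n × Fin n => p.1 < p.2), ((p.2 : ℤ) - p.1)
      = (n + 1).choose 3 := by
  have hIio (b : Fin n) : ∑ a ∈ Iio b, ((b : ℤ) - a) = ∑ a ∈ range b, ((b : ℤ) - a) := by
    rw [← Nat.Iio_eq_range, ← Fin.map_valEmbedding_Iio, sum_map]; rfl
  rw [sum_filter_lt_eq_sum_sum_Iio (fun a b : Fin n => (b : ℤ) - a)]
  simp only [hIio, sum_range_sub_eq_choose_two]
  rw [Fin.sum_univ_eq_sum_range (fun b : ℕ => (((b + 1).choose 2 : ℕ) : ℤ)), ← Nat.cast_sum,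
    sum_range_succ_choose_two]

lemma sum_Icc_one_eq_sum_range {M : Type*} [AddCommMonoid M] (g : ℕ → M) (h : g n = g 0) :
    ∑ i ∈ Icc 1 n, g i = ∑ i ∈ range n, g i := by
  have hshift : ∑ i ∈ Icc 1 n, g i = ∑ i ∈ range n, g (i + 1) := by
    rw [range_eq_Ico, sum_Ico_add', zero_add, Ico_add_one_right_eq_Icc]
  cases n with
  | zero => simp
  | succ m => rw [hshift, sum_range_succ, h, sum_range_succ']

lemma filter_sub_lt_sub_eq_Ioc {a b : Fin n} (h : a < b) :
    univ.filter (fun t => b - t < a - t) = Ioc a b := by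
  ext t
  simp only [mem_filter, mem_univ, true_and, mem_Ioc]
  grind [Fin.coe_sub_iff_le, Fin.coe_sub_iff_lt]

lemma card_filter_sub_lt_sub_add {a b : Fin n} (h : a < b) :
    #(univ.filter (fun t => a - t < b - t)) + (b - a) = n := by
  have := a.neZero
  have hcompl :
      univ.filter (fun t => ¬ a - t < b - t) = univ.filter (fun t => b - t < a - t) := by
    ext t
    simp only [mem_filter, mem_univ, true_and, not_lt]
    exact ⟨fun h' => h'.lt_of_ne (sub_left_injective.ne h.ne'), le_of_lt⟩
  have hsplit := card_filter_add_card_filter_not (s := univ) (fun t : Fin n => a - t < b - t)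
  rwa [card_univ, Fintype.card_fin, hcompl, filter_sub_lt_sub_eq_Ioc h, Fin.card_Ioc] at hsplit

section Rotation
open Fin.NatCast
variable [NeZero n]

lemma finRotate_pow_apply (i : ℕ) (q : Fin n) : (finRotate n ^ i) q = q + (i : Fin n) := by
  induction i with
  | zero => simp
  | succ i ih => rw [pow_succ', Equiv.Perm.mul_apply, ih, finRotate_apply, Nat.cast_succ, add_assoc]

lemma finRotate_pow_self : finRotate n ^ n = 1 :=
  Equiv.ext fun q => by simp [finRotate_pow_apply]

lemma inversions_mul_finRotate_pow (π : Equiv.Perm (Fin n)) (t : Fin n) :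
    inversions (π * finRotate n ^ (t : ℕ))
      = #(univ.filter (fun p : Fin n × Fin n => π p.2 < π p.1 ∧ p.1 - t < p.2 - t)) :=
  card_equiv ((Equiv.addRight t).prodCongr (Equiv.addRight t))
    (by simp [finRotate_pow_apply, and_comm])

theorem sum_inversions_mul_finRotate_pow (π : Equiv.Perm (Fin n)) :
    ∑ t : Fin n, (inversions (π * finRotate n ^ (t : ℕ)) : ℤ) = cwinv π + (n + 1).choose 3 := by
  set f : Fin n × Fin n → ℤ := fun p =>
    if π p.2 < π p.1 then #(univ.filter (fun t => p.1 - t < p.2 - t)) else 0 with hf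
  have hcount : ∑ t : Fin n, (inversions (π * finRotate n ^ (t : ℕ)) : ℤ) = ∑ p, f p := by
    simp only [inversions_mul_finRotate_pow, card_filter, Nat.cast_sum]
    rw [sum_comm]
    refine sum_congr rfl fun p _ => ?_
    by_cases h : π p.2 < π p.1 <;> simp [hf, h]
  have hpair : ∀ p ∈ univ.filter (fun p : Fin n × Fin n => p.1 < p.2),
      f p + f p.swap
        = ((p.2 : ℤ) - p.1) + if π p.2 < π p.1 then n - 2 * ((p.2 : ℤ) - p.1) else 0 := by
    rintro ⟨a, b⟩ hab
    replace hab : a < b := by simpa using hab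
    have hfwd := card_filter_sub_lt_sub_add hab
    have hbwd := congrArg card (filter_sub_lt_sub_eq_Ioc hab)
    rw [Fin.card_Ioc] at hbwd
    have hab_val := Fin.lt_def.1 hab
    by_cases hinv : π b < π a
    · simp only [hf, hinv, if_true, not_lt_of_gt hinv, if_false, Prod.swap]
      omega
    · have : π a < π b := lt_of_le_of_ne (not_lt.1 hinv) (π.injective.ne hab.ne)
      simp only [hf, hinv, if_false, this, if_true, Prod.swap]
      omega
  rw [hcount, sum_eq_sum_filter_lt_add_swap f (fun a => by simp [hf]), sum_congr rfl hpair,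
    sum_add_distrib, sum_filter_lt_sub_eq_choose_three, ← sum_filter, filter_filter,
    sum_sub_distrib, sum_const, ← mul_sum, sum_filter_inversion_sub_eq_winv, cwinv, inversions,
    nsmul_eq_mul]
  ring

end Rotation
end

theorem min_le_avg_inv {n : ℕ} (hn : 0 < n) (π : Equiv.Perm (Fin n)) :
    (∃ i < n, (n : ℤ) * inversions (π * (finRotate n) ^ i)
        ≤ ∑ i ∈ Finset.Icc 1 n, (inversions (π * (finRotate n) ^ i) : ℤ)) ∧
    ∑ i ∈ Finset.Icc 1 n, (inversions (π * (finRotate n) ^ i) : ℤ)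
      = cwinv π + (n + 1).choose 3 := by
  have : NeZero n := ⟨hn.ne'⟩
  have hsum : ∑ i ∈ Icc 1 n, (inversions (π * finRotate n ^ i) : ℤ)
      = ∑ t : Fin n, (inversions (π * finRotate n ^ (t : ℕ)) : ℤ) := by
    rw [sum_Icc_one_eq_sum_range _ (by simp [finRotate_pow_self]),
      Fin.sum_univ_eq_sum_range (fun i => (inversions (π * finRotate n ^ i) : ℤ))]
  refine ⟨?_, hsum.trans (sum_inversions_mul_finRotate_pow π)⟩
  obtain ⟨t, -, ht⟩ := exists_min_image univ
    (fun t : Fin n => inversions (π * finRotate n ^ (t : ℕ))) univ_nonempty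
  refine ⟨t, t.isLt, ?_⟩
  rw [hsum]
  calc (n : ℤ) * inversions (π * finRotate n ^ (t : ℕ))
      = ∑ _ : Fin n, (inversions (π * finRotate n ^ (t : ℕ)) : ℤ) := by simp
    _ ≤ _ := sum_le_sum fun s _ => by exact_mod_cast ht s (mem_univ s)
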